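/- For an MDP A and convex closed polytope H, the set X = {Δ ∈ H : Δ = Δ·M_τ for some one-step MDP strategy τ} of fixed distributions is convex. -/

import Mathlib

/-!
Given fixed points `x = x·M_{τx}` and `y = y·M_{τy}` and weights `a, b`, let `z = a x + b y`.
At each state `i`, the strategy `τz` plays `τx` with probability `a xᵢ / zᵢ` and `τy` with
probability `b yᵢ / zᵢ` (any strategy will do where `zᵢ = 0`). Then
`zᵢ τz(α, i) = a xᵢ τx(α, i) + b yᵢ τy(α, i)`, and since `Δ·M_τ` depends only on the
products `Δᵢ τ(α, i)`, this gives `z·M_{τz} = a x + b y = z`.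
-/

open scoped BigOperators

/-- An `n × n` real matrix is row-stochastic if all entries are nonnegative
and each row sums to `1`. -/
def RowStochastic {n : ℕ} (M : Matrix (Fin n) (Fin n) ℝ) : Prop :=
  (∀ i j, 0 ≤ M i j) ∧ ∀ i, ∑ j, M i j = 1

/-- A probability distribution on `n` states. -/
def IsDist {n : ℕ} (Δ : Fin n → ℝ) : Prop :=
  (∀ i, 0 ≤ Δ i) ∧ ∑ i, Δ i = 1

/-- A one-step MDP strategy: each state gets a probability distribution over actions. -/
def IsMDPStrategy {n : ℕ} {A : Type} [Fintype A] (τ : A → Fin n → ℝ) : Prop :=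
  (∀ α i, 0 ≤ τ α i) ∧ ∀ i, ∑ α, τ α i = 1

/-- The stochastic matrix induced by a one-step MDP strategy. -/
noncomputable def stratMatrix {n : ℕ} {A : Type} [Fintype A]
    (M : A → Matrix (Fin n) (Fin n) ℝ) (τ : A → Fin n → ℝ) :
    Matrix (Fin n) (Fin n) ℝ :=
  fun i j => ∑ α, τ α i * M α i j

/-- The distribution reached after `m` steps applying the sequence of one-step
strategies `σ` from `Δ`. -/
noncomputable def iterDist {n : ℕ} {A : Type} [Fintype A]
    (M : A → Matrix (Fin n) (Fin n) ℝ) (σ : ℕ → A → Fin n → ℝ)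
    (Δ : Fin n → ℝ) : ℕ → Fin n → ℝ
  | 0 => Δ
  | m + 1 => Matrix.vecMul (iterDist M σ Δ m) (stratMatrix M (σ m))

/-- `Δ` admits an `H`-safe strategy. -/
def HSafe {n : ℕ} {A : Type} [Fintype A]
    (M : A → Matrix (Fin n) (Fin n) ℝ) (H : Set (Fin n → ℝ)) (Δ : Fin n → ℝ) : Prop :=
  ∃ σ : ℕ → A → Fin n → ℝ,
    (∀ m, IsMDPStrategy (σ m)) ∧ ∀ m, iterDist M σ Δ m ∈ H

/-- The winning region: distributions of `H` admitting an `H`-safe strategy. -/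
def Hwin {n : ℕ} {A : Type} [Fintype A]
    (M : A → Matrix (Fin n) (Fin n) ℝ) (H : Set (Fin n → ℝ)) : Set (Fin n → ℝ) :=
  {Δ | Δ ∈ H ∧ HSafe M H Δ}

/-- A convex polytope in H-representation: a finite intersection of half-spaces. -/
def IsPolytope {n : ℕ} (H : Set (Fin n → ℝ)) : Prop :=
  ∃ (k : ℕ) (a : Fin k → Fin n → ℝ) (b : Fin k → ℝ),
    H = {x | ∀ j, ∑ i, a j i * x i ≤ b j}

/-- A one-step PFA strategy: a probability distribution over actions. -/
def IsPFAStrategy {A : Type} [Fintype A] (τ : A → ℝ) : Prop :=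
  (∀ α, 0 ≤ τ α) ∧ ∑ α, τ α = 1

/-- The stochastic matrix induced by a one-step PFA strategy. -/
noncomputable def pfaMatrix {n : ℕ} {A : Type} [Fintype A]
    (M : A → Matrix (Fin n) (Fin n) ℝ) (τ : A → ℝ) : Matrix (Fin n) (Fin n) ℝ :=
  ∑ α, τ α • M α

theorem IsPolytope.convex {n : ℕ} {H : Set (Fin n → ℝ)} (hH : IsPolytope H) :
    Convex ℝ H := by
  obtain ⟨k, a, b, rfl⟩ := hH
  rw [Set.ofPred_forall]
  refine convex_iInter fun j => convex_halfSpace_le ⟨fun x y => ?_, fun c x => ?_⟩ (b j)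
  · simp only [Pi.add_apply, mul_add, Finset.sum_add_distrib]
  · simp only [Pi.smul_apply, smul_eq_mul, Finset.mul_sum, mul_left_comm]

section Mixing

variable {n : ℕ} {A : Type}

noncomputable def mixStrategy (u v : Fin n → ℝ) (τx τy : A → Fin n → ℝ) : A → Fin n → ℝ :=
  fun α i => if u i + v i = 0 then τx α i else (u i * τx α i + v i * τy α i) / (u i + v i)

theorem mul_mixStrategy {u v : Fin n → ℝ} (hu : ∀ i, 0 ≤ u i) (hv : ∀ i, 0 ≤ v i)
    (τx τy : A → Fin n → ℝ) (α : A) (i : Fin n) :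
    (u i + v i) * mixStrategy u v τx τy α i = u i * τx α i + v i * τy α i := by
  by_cases h : u i + v i = 0
  · have hui : u i = 0 := by linarith [hu i, hv i]
    have hvi : v i = 0 := by linarith [hu i, hv i]
    simp [hui, hvi]
  · simp only [mixStrategy, if_neg h]
    field_simp

variable [Fintype A]

theorem vecMul_stratMatrix_apply (M : A → Matrix (Fin n) (Fin n) ℝ) (τ : A → Fin n → ℝ)
    (w : Fin n → ℝ) (j : Fin n) :
    Matrix.vecMul w (stratMatrix M τ) j = ∑ i, ∑ α, w i * τ α i * M α i j := by
  simp only [Matrix.vecMul, dotProduct, stratMatrix, Finset.mul_sum, mul_assoc]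

theorem vecMul_stratMatrix_eq_add (M : A → Matrix (Fin n) (Fin n) ℝ)
    {τ τx τy : A → Fin n → ℝ} {w u v : Fin n → ℝ}
    (h : ∀ α i, w i * τ α i = u i * τx α i + v i * τy α i) :
    Matrix.vecMul w (stratMatrix M τ) =
      Matrix.vecMul u (stratMatrix M τx) + Matrix.vecMul v (stratMatrix M τy) := by
  funext j
  simp only [Pi.add_apply, vecMul_stratMatrix_apply, h, add_mul, Finset.sum_add_distrib]

theorem IsMDPStrategy.mixStrategy {u v : Fin n → ℝ} (hu : ∀ i, 0 ≤ u i) (hv : ∀ i, 0 ≤ v i)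
    {τx τy : A → Fin n → ℝ} (hτx : IsMDPStrategy τx) (hτy : IsMDPStrategy τy) :
    IsMDPStrategy (mixStrategy u v τx τy) := by
  refine ⟨fun α i => ?_, fun i => ?_⟩
  · unfold _root_.mixStrategy
    split_ifs
    · exact hτx.1 α i
    · exact div_nonneg (add_nonneg (mul_nonneg (hu i) (hτx.1 α i))
        (mul_nonneg (hv i) (hτy.1 α i))) (add_nonneg (hu i) (hv i))
  · by_cases h : u i + v i = 0
    · simpa [_root_.mixStrategy, h] using hτx.2 i
    · simp only [_root_.mixStrategy, if_neg h, ← Finset.sum_div, Finset.sum_add_distrib,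
        ← Finset.mul_sum, hτx.2 i, hτy.2 i, mul_one]
      exact div_self h

end Mixing

theorem stmt11_general {n : ℕ} {A : Type} [Fintype A]
    (M : A → Matrix (Fin n) (Fin n) ℝ)
    (H : Set (Fin n → ℝ)) (hpoly : IsPolytope H) (hHd : ∀ Δ ∈ H, IsDist Δ) :
    Convex ℝ {Δ | Δ ∈ H ∧ ∃ τ : A → Fin n → ℝ, IsMDPStrategy τ ∧
      Matrix.vecMul Δ (stratMatrix M τ) = Δ} := by
  rintro x ⟨hxH, τx, hτx, hfx⟩ y ⟨hyH, τy, hτy, hfy⟩ a b ha hb hab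
  have hax : ∀ i, 0 ≤ (a • x) i := fun i => mul_nonneg ha ((hHd x hxH).1 i)
  have hby : ∀ i, 0 ≤ (b • y) i := fun i => mul_nonneg hb ((hHd y hyH).1 i)
  refine ⟨hpoly.convex hxH hyH ha hb hab, mixStrategy (a • x) (b • y) τx τy,
    hτx.mixStrategy hax hby hτy, ?_⟩
  rw [vecMul_stratMatrix_eq_add (w := a • x + b • y) M (mul_mixStrategy hax hby τx τy),
    Matrix.smul_vecMul, Matrix.smul_vecMul, hfx, hfy]

theorem stmt11 {n : ℕ} {A : Type} [Fintype A]
    (M : A → Matrix (Fin n) (Fin n) ℝ) (hM : ∀ α, RowStochastic (M α))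
    (H : Set (Fin n → ℝ)) (hpoly : IsPolytope H) (hHd : ∀ Δ ∈ H, IsDist Δ) :
    Convex ℝ {Δ | Δ ∈ H ∧ ∃ τ : A → Fin n → ℝ, IsMDPStrategy τ ∧
      Matrix.vecMul Δ (stratMatrix M τ) = Δ} :=
  stmt11_general M H hpoly hHd
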